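/- Let x be a random vector with known mean x̄ and covariance Σ, H a matrix with rows Hⱼ and k a vector with entries kⱼ, and for each j let αⱼ ∈ [0,1) and δⱼ > 0 with ∑ⱼ αⱼ ≤ β. If Hⱼ x̄ ≤ kⱼ − δⱼ and Hⱼ Σ Hⱼᵀ ≤ αⱼ δⱼ²/(1 − αⱼ) for every j, then Pr[H x ≤ k] ≥ 1 − β. -/

import Mathlib

/-!
Each row `Hⱼ x` is a square-integrable random variable with mean `Hⱼ x̄` and variance
`Hⱼ Σ Hⱼᵀ`. Cantelli's one-sided inequality bounds `Pr[Hⱼ x > kⱼ]` by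
`σ² / (σ² + δⱼ²)`, which the variance assumption makes at most `αⱼ`; Boole's inequality
then bounds the probability that some row constraint fails by `∑ⱼ αⱼ ≤ β`.
-/

open MeasureTheory Matrix ProbabilityTheory

section

variable {Ω : Type*} [MeasurableSpace Ω] {μ : Measure Ω}

theorem measureReal_mean_add_le_le_variance_div [IsProbabilityMeasure μ] {X : Ω → ℝ}
    (hX : MemLp X 2 μ) {t : ℝ} (ht : 0 < t) :
    μ.real {ω | μ[X] + t ≤ X ω} ≤ Var[X; μ] / (Var[X; μ] + t ^ 2) := by
  set v := Var[X; μ]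
  have hv : 0 ≤ v := variance_nonneg _ _
  -- Markov's inequality for `(X - μ[X] + u)²`, with the shift `u` that optimizes the bound.
  set u := v / t
  set Y : Ω → ℝ := fun ω => X ω - μ[X] + u
  have hY : MemLp Y 2 μ := (hX.sub (memLp_const _)).add (memLp_const _)
  have hsub : {ω | μ[X] + t ≤ X ω} ⊆ {ω | (t + u) ^ 2 ≤ Y ω ^ 2} := fun ω hω => by
    have hω : μ[X] + t ≤ X ω := hω
    have : t + u ≤ Y ω := by simp only [Y]; linarith
    exact pow_le_pow_left₀ (by positivity) this 2
  have hmeanY : μ[Y] = u := by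
    have hint := hX.integrable one_le_two
    rw [integral_add (f := fun ω => X ω - μ[X]) (hint.sub (integrable_const _)) (integrable_const u),
      integral_sub hint (integrable_const _)]
    simp
  have hvarY : Var[Y; μ] = v :=
    (variance_add_const (hX.1.sub aestronglyMeasurable_const) u).trans (variance_sub_const hX.1 _)
  have hsqY : μ[fun ω => Y ω ^ 2] = v + u ^ 2 := by
    have := variance_eq_sub hY
    rw [hvarY, hmeanY] at this
    simp only [Pi.pow_apply] at this
    linarith
  have markov : (t + u) ^ 2 * μ.real {ω | μ[X] + t ≤ X ω} ≤ v + u ^ 2 :=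
    calc (t + u) ^ 2 * μ.real {ω | μ[X] + t ≤ X ω}
        ≤ (t + u) ^ 2 * μ.real {ω | (t + u) ^ 2 ≤ Y ω ^ 2} := by
          gcongr
          exact measure_ne_top μ _
      _ ≤ μ[fun ω => Y ω ^ 2] :=
          mul_meas_ge_le_integral_of_nonneg (ae_of_all _ fun ω => sq_nonneg _) hY.integrable_sq _
      _ = v + u ^ 2 := hsqY
  calc μ.real {ω | μ[X] + t ≤ X ω} ≤ (v + u ^ 2) / (t + u) ^ 2 := by
        rw [le_div_iff₀ (by positivity)]
        linarith
    _ = v / (v + t ^ 2) := by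
        simp only [u]
        field_simp
        ring

theorem measureReal_lt_le_of_variance_le [IsProbabilityMeasure μ] {X : Ω → ℝ}
    (hX : MemLp X 2 μ) {k α δ : ℝ} (hα : α < 1) (hδ : 0 < δ) (hmean : μ[X] ≤ k - δ)
    (hvar : Var[X; μ] ≤ α * δ ^ 2 / (1 - α)) :
    μ.real {ω | k < X ω} ≤ α := by
  have hsub : {ω | k < X ω} ⊆ {ω | μ[X] + δ ≤ X ω} := fun ω (hω : k < X ω) =>
    show μ[X] + δ ≤ X ω by linarith
  have hvar' : Var[X; μ] ≤ α * (Var[X; μ] + δ ^ 2) := by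
    rw [le_div_iff₀ (by linarith)] at hvar
    linarith
  calc μ.real {ω | k < X ω} ≤ μ.real {ω | μ[X] + δ ≤ X ω} := measureReal_mono hsub
    _ ≤ Var[X; μ] / (Var[X; μ] + δ ^ 2) := measureReal_mean_add_le_le_variance_div hX hδ
    _ ≤ α := by
      rw [div_le_iff₀ (add_pos_of_nonneg_of_pos (variance_nonneg _ _) (by positivity))]
      exact hvar'

theorem one_sub_sum_measureReal_compl_le [IsProbabilityMeasure μ] {ι : Type*} [Fintype ι]
    (s : ι → Set Ω) : 1 - ∑ i, μ.real (s i)ᶜ ≤ μ.real (⋂ i, s i) := by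
  have : 1 ≤ μ.real (⋂ i, s i) + ∑ i, μ.real (s i)ᶜ :=
    calc 1 = μ.real ((⋂ i, s i) ∪ (⋂ i, s i)ᶜ) := by rw [Set.union_compl_self, probReal_univ]
      _ ≤ μ.real (⋂ i, s i) + μ.real (⋃ i, (s i)ᶜ) := by
        rw [← Set.compl_iInter]
        exact measureReal_union_le _ _
      _ ≤ μ.real (⋂ i, s i) + ∑ i, μ.real (s i)ᶜ := by
        gcongr
        exact measureReal_iUnion_fintype_le _
  linarith

variable {ι : Type*} [Fintype ι] {x : Ω → ι → ℝ}

noncomputable def covarianceMatrix (x : Ω → ι → ℝ) (μ : Measure Ω) : Matrix ι ι ℝ :=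
  Matrix.of fun i j => cov[fun ω => x ω i, fun ω => x ω j; μ]

lemma memLp_dotProduct (hx : ∀ i, MemLp (fun ω => x ω i) 2 μ) (v : ι → ℝ) :
    MemLp (fun ω => v ⬝ᵥ x ω) 2 μ :=
  memLp_finsetSum _ fun i _ => (hx i).const_mul (v i)

lemma integral_dotProduct (hx : ∀ i, Integrable (fun ω => x ω i) μ) (v : ι → ℝ) :
    μ[fun ω => v ⬝ᵥ x ω] = v ⬝ᵥ fun i => μ[fun ω => x ω i] := by
  simp only [dotProduct]
  rw [integral_finsetSum _ fun i _ => (hx i).const_mul (v i)]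
  simp only [integral_const_mul]

lemma variance_dotProduct [IsFiniteMeasure μ] (hx : ∀ i, MemLp (fun ω => x ω i) 2 μ)
    (v : ι → ℝ) : Var[fun ω => v ⬝ᵥ x ω; μ] = v ⬝ᵥ (covarianceMatrix x μ *ᵥ v) := by
  simp only [dotProduct]
  rw [variance_fun_sum fun i => (hx i).const_mul (v i)]
  simp only [covariance_const_mul_left, covariance_const_mul_right, covarianceMatrix, mulVec,
    dotProduct, of_apply, Finset.mul_sum]
  exact Finset.sum_congr rfl fun i _ => Finset.sum_congr rfl fun j _ => by ring

end

theorem jcc_cantelli_bound_general {Ω : Type*} [MeasurableSpace Ω] (μ : Measure Ω)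
    [IsProbabilityMeasure μ] {n r : ℕ} (x : Ω → Fin n → ℝ)
    (hx : ∀ i, MemLp (fun ω => x ω i) 2 μ)
    (xbar : Fin n → ℝ) (hxbar : ∀ i, xbar i = ∫ ω, x ω i ∂μ)
    (S : Matrix (Fin n) (Fin n) ℝ)
    (hS : ∀ i j, S i j = ∫ ω, (x ω i - xbar i) * (x ω j - xbar j) ∂μ)
    (H : Matrix (Fin r) (Fin n) ℝ) (k : Fin r → ℝ)
    (α δ : Fin r → ℝ) (β : ℝ)
    (hα : ∀ j, 0 ≤ α j ∧ α j < 1) (hδ : ∀ j, 0 < δ j) (hsum : ∑ j, α j ≤ β)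
    (hmean : ∀ j, (H *ᵥ xbar) j ≤ k j - δ j)
    (hvar : ∀ j, (H *ᵥ (S *ᵥ (fun i => H j i))) j ≤ α j * (δ j) ^ 2 / (1 - α j)) :
    1 - β ≤ (μ {ω | ∀ j, (H *ᵥ x ω) j ≤ k j}).toReal := by
  have hxbar' : xbar = fun i => μ[fun ω => x ω i] := funext hxbar
  have hS' : S = covarianceMatrix x μ := by
    ext i j
    simp [covarianceMatrix, covariance, hS, hxbar]
  have hrow : ∀ j, μ.real {ω | (H *ᵥ x ω) j ≤ k j}ᶜ ≤ α j := fun j => by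
    simp only [Set.compl_ofPred, not_le]
    refine measureReal_lt_le_of_variance_le (memLp_dotProduct hx (H j)) (hα j).2 (hδ j) ?_ ?_
    · rw [integral_dotProduct fun i => (hx i).integrable one_le_two, ← hxbar']
      exact hmean j
    · rw [variance_dotProduct hx, ← hS']
      exact hvar j
  calc 1 - β ≤ 1 - ∑ j, μ.real {ω | (H *ᵥ x ω) j ≤ k j}ᶜ := by
        linarith [Finset.sum_le_sum fun j (_ : j ∈ Finset.univ) => hrow j]
    _ ≤ μ.real (⋂ j, {ω | (H *ᵥ x ω) j ≤ k j}) := one_sub_sum_measureReal_compl_le _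
    _ = _ := by rw [← Set.ofPred_forall]; rfl

/-- Combination of the Cantelli–Chebyshev relaxation of individual chance constraints
with Boole's inequality (equations (19)–(20) of the paper): if for each row `j`,
`Hⱼ x̄ ≤ kⱼ − δⱼ` and `Hⱼ Σ Hⱼᵀ ≤ αⱼδⱼ²/(1 − αⱼ)` with `αⱼ ∈ [0,1)`, `δⱼ > 0`, and
`∑ⱼ αⱼ ≤ β`, then `Pr[Hx ≤ k] ≥ 1 − β`. -/
theorem jcc_cantelli_bound {Ω : Type*} [MeasurableSpace Ω] (μ : Measure Ω)
    [IsProbabilityMeasure μ] {n r : ℕ} (x : Ω → Fin n → ℝ)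
    (hxm : ∀ i, Measurable (fun ω => x ω i))
    (hx : ∀ i, MemLp (fun ω => x ω i) 2 μ)
    (xbar : Fin n → ℝ) (hxbar : ∀ i, xbar i = ∫ ω, x ω i ∂μ)
    (S : Matrix (Fin n) (Fin n) ℝ)
    (hS : ∀ i j, S i j = ∫ ω, (x ω i - xbar i) * (x ω j - xbar j) ∂μ)
    (H : Matrix (Fin r) (Fin n) ℝ) (k : Fin r → ℝ)
    (α δ : Fin r → ℝ) (β : ℝ)
    (hα : ∀ j, 0 ≤ α j ∧ α j < 1) (hδ : ∀ j, 0 < δ j) (hsum : ∑ j, α j ≤ β)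
    (hmean : ∀ j, (H *ᵥ xbar) j ≤ k j - δ j)
    (hvar : ∀ j, (H *ᵥ (S *ᵥ (fun i => H j i))) j ≤ α j * (δ j) ^ 2 / (1 - α j)) :
    1 - β ≤ (μ {ω | ∀ j, (H *ᵥ x ω) j ≤ k j}).toReal :=
  jcc_cantelli_bound_general μ x hx xbar hxbar S hS H k α δ β hα hδ hsum hmean hvar
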